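/- Let (P_i : i ∈ I) be a family of partial orders such that for every finite set s ⊆ I the product ∏_{i∈s} P_i (ordered coordinatewise) has the countable chain condition. Then the finite support product of (P_i : i ∈ I) — whose conditions are functions p defined on a finite subset of I with p(i) ∈ P_i, ordered by q ≤ p iff dom(p) ⊆ dom(q) and q(i) ≤ p(i) for all i ∈ dom(p) — has the countable chain condition. -/

import Mathlib

noncomputable section

/-- The first uncountable ordinal `ω₁`. -/
def omega1 : Ordinal.{0} := (Cardinal.aleph 1).ord

/-- A club (closed unbounded) subset of `ω₁`. -/
def IsClubSet (C : Set Ordinal) : Prop :=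
  C ⊆ Set.Iio omega1 ∧
  (∀ β < omega1, ∃ γ ∈ C, β ≤ γ) ∧
  (∀ α < omega1, Order.IsSuccLimit α → (∀ β < α, ∃ γ ∈ C, β ≤ γ ∧ γ < α) → α ∈ C)

/-- A stationary subset of `ω₁`: one meeting every club. -/
def IsStationaryIn (S : Set Ordinal) : Prop :=
  S ⊆ Set.Iio omega1 ∧ ∀ C : Set Ordinal, IsClubSet C → (S ∩ C).Nonempty

/-- The diamond principle `♦`. -/
def DiamondPrinciple : Prop :=
  ∃ a : Ordinal → Set Ordinal,
    (∀ α, α < omega1 → a α ⊆ Set.Iio α) ∧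
    ∀ A : Set Ordinal, A ⊆ Set.Iio omega1 →
      IsStationaryIn {α | α < omega1 ∧ A ∩ Set.Iio α = a α}

open Classical in
/-- The level of a node of a tree: the order type of its set of strict
predecessors (defaulting to `0` when that set is not well-ordered). -/
noncomputable def levelOf {β : Type} [Preorder β] (x : β) : Ordinal :=
  if h : IsWellOrder {y : β // y < x} (· < ·) then
    @Ordinal.type {y : β // y < x} (· < ·) h
  else 0

/-- A tree order: the strict predecessors of every node are well-ordered. -/
def IsTreeOrder (β : Type) [Preorder β] : Prop :=
  ∀ x : β, IsWellOrder {y : β // y < x} (· < ·)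

/-- The height of a tree: the supremum of the successors of the levels of its nodes. -/
noncomputable def heightOf (β : Type) [Preorder β] : Ordinal :=
  ⨆ x : β, (levelOf x + 1)

/-- A Suslin tree: a tree of height `ω₁` all of whose chains and antichains
(in the tree sense: sets of pairwise incomparable nodes) are countable. -/
def IsSuslinTree (β : Type) [PartialOrder β] : Prop :=
  IsTreeOrder β ∧ heightOf β = omega1 ∧
  (∀ C : Set β, IsChain (· ≤ ·) C → C.Countable) ∧
  (∀ A : Set β, (A.Pairwise fun x y => ¬ x ≤ y ∧ ¬ y ≤ x) → A.Countable)

/-- Compatibility (forcing sense): a common lower bound exists. -/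
def Compat {P : Type*} [Preorder P] (p q : P) : Prop := ∃ r, r ≤ p ∧ r ≤ q

/-- The countable chain condition: every set of pairwise incompatible elements is countable. -/
def CCC (P : Type*) [Preorder P] : Prop :=
  ∀ A : Set P, (A.Pairwise fun p q => ¬ Compat p q) → A.Countable

/-- Compatibility in the upward sense: a common upper bound exists. -/
def UpCompat {P : Type*} [Preorder P] (p q : P) : Prop := ∃ r, p ≤ r ∧ q ≤ r

/-- The countable chain condition with compatibility read as the existence of
common upper bounds. -/
def CCCUp (P : Type*) [Preorder P] : Prop :=
  ∀ A : Set P, (A.Pairwise fun p q => ¬ UpCompat p q) → A.Countable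

/-- The Knaster property. -/
def Knaster (P : Type*) [Preorder P] : Prop :=
  ∀ A : Set P, ¬ A.Countable → ∃ B ⊆ A, ¬ B.Countable ∧ B.Pairwise Compat

/-- A bundled partial order. -/
structure PoCarrier : Type 1 where
  carrier : Type
  po : PartialOrder carrier

attribute [instance] PoCarrier.po

/-- The finite support product of a family `(P i : i ∈ I)` of partial orders:
conditions are functions defined on a finite subset of `I` (represented as
finitely-supported `Option`-valued functions) with `p i ∈ P i` on the domain. -/
def FinSupportProd (I : Type*) (P : I → Type*) :=
  {f : ∀ i, Option (P i) // {i | f i ≠ none}.Finite}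

/-- `q ≤ p` iff `dom p ⊆ dom q` and `q i ≤ p i` for every `i ∈ dom p`. -/
instance {I : Type*} {P : I → Type*} [∀ i, PartialOrder (P i)] :
    PartialOrder (FinSupportProd I P) where
  le q p := ∀ i x, p.1 i = some x → ∃ y, q.1 i = some y ∧ y ≤ x
  le_refl p i x h := ⟨x, h, le_rfl⟩
  le_trans a b c hab hbc i x hcx := by
    obtain ⟨y, hby, hyx⟩ := hbc i x hcx
    obtain ⟨z, haz, hzy⟩ := hab i y hby
    exact ⟨z, haz, hzy.trans hyx⟩
  le_antisymm a b hab hba := by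
    apply Subtype.ext
    funext i
    cases hbi : b.1 i with
    | none =>
      cases hai : a.1 i with
      | none => rfl
      | some z =>
        obtain ⟨w, hbw, -⟩ := hba i z hai
        rw [hbi] at hbw; exact absurd hbw (by simp)
    | some x =>
      obtain ⟨y, hay, hyx⟩ := hab i x hbi
      obtain ⟨z, hbz, hzy⟩ := hba i y hay
      rw [hbi] at hbz
      obtain rfl : x = z := by injection hbz
      rw [hay, le_antisymm hyx hzy]

/-!
By the Δ-system lemma, an uncountable antichain of the finite support product contains an
uncountable subfamily whose domains pairwise intersect in one fixed finite root `r`. Two of its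
conditions whose restrictions to `r` are compatible are themselves compatible: off `r` their
domains are disjoint, so a common extension on `r` can be glued with both of them. Hence
restriction to `r` is injective on the subfamily and maps it onto an antichain of
`∏ i ∈ r, P i`, which is countable.

The Δ-system lemma is proved by induction on a bound for the sizes of the sets: if some point
lies in uncountably many of them, remove it and recurse; otherwise a maximal pairwise disjoint
subfamily is uncountable, as the countably many points it covers meet only countably many sets.
-/

open Finset in
theorem Set.exists_uncountable_pairwise_disjoint {α β : Type*} {S : Set α} {f : α → Set β}
    (hS : ¬S.Countable) (hf : ∀ a ∈ S, (f a).Countable)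
    (hfib : ∀ x, {a ∈ S | x ∈ f a}.Countable) :
    ∃ T ⊆ S, ¬T.Countable ∧ T.PairwiseDisjoint f := by
  obtain ⟨T, hT⟩ := zorn_subset {T | T ⊆ S ∧ T.PairwiseDisjoint f} fun c hcS hc =>
    ⟨⋃₀ c, ⟨sUnion_subset fun t ht => (hcS ht).1,
      (pairwise_sUnion hc.directedOn).2 fun t ht => (hcS ht).2⟩, fun _ => subset_sUnion_of_mem⟩
  obtain ⟨hTS, hTdisj⟩ := hT.prop
  refine ⟨T, hTS, fun hTc => hS ?_, hTdisj⟩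
  have hcover : S ⊆ T ∪ ⋃ x ∈ ⋃ t ∈ T, f t, {a ∈ S | x ∈ f a} := by
    intro a ha
    by_cases haT : a ∈ T
    · exact Or.inl haT
    have hmeets : ∃ t ∈ T, ¬Disjoint (f t) (f a) := by
      by_contra! hdisj
      refine haT (hT.mem_of_prop_insert ⟨insert_subset ha hTS, pairwise_insert.2 ⟨hTdisj, ?_⟩⟩)
      exact fun t ht _ => ⟨(hdisj t ht).symm, hdisj t ht⟩
    obtain ⟨t, ht, x, hxt, hxa⟩ := hmeets.imp fun t => And.imp_right not_disjoint_iff.1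
    exact Or.inr (mem_biUnion (mem_biUnion ht hxt) ⟨ha, hxa⟩)
  refine Countable.mono hcover (hTc.union ?_)
  exact (hTc.biUnion fun t ht => hf t (hTS ht)).biUnion fun x _ => hfib x

open Finset in
theorem exists_uncountable_delta_system_of_card_le {α β : Type*} [DecidableEq β] (n : ℕ) :
    ∀ {S : Set α} {f : α → Finset β}, ¬S.Countable → (∀ a ∈ S, #(f a) ≤ n) →
      ∃ T ⊆ S, ¬T.Countable ∧ ∃ r, T.Pairwise fun a b => f a ∩ f b = r := by
  induction n with
  | zero =>
    intro S f hS hcard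
    refine ⟨S, subset_rfl, hS, ∅, fun a ha b _ _ => ?_⟩
    simp only [card_eq_zero.1 (Nat.le_zero.1 (hcard a ha)), empty_inter]
  | succ n ih =>
    intro S f hS hcard
    by_cases hfib : ∀ x, {a ∈ S | x ∈ f a}.Countable
    · obtain ⟨T, hTS, hT, hdisj⟩ := Set.exists_uncountable_pairwise_disjoint
        (f := fun a => (f a : Set β)) hS (fun a _ => (f a).countable_toSet) (by simpa using hfib)
      exact ⟨T, hTS, hT, ∅, fun a ha b hb hab =>
        disjoint_iff_inter_eq_empty.1 (disjoint_coe.1 (hdisj ha hb hab))⟩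
    obtain ⟨x, hx⟩ := not_forall.1 hfib
    obtain ⟨T, hTS, hT, r, hr⟩ := ih (f := fun a => (f a).erase x) hx fun a ha => by
      simpa [card_erase_of_mem ha.2] using Nat.sub_le_of_le_add (hcard a ha.1)
    refine ⟨T, fun a ha => (hTS ha).1, hT, insert x r, fun a ha b hb hab => ?_⟩
    have hxab : x ∈ f a ∩ f b := mem_inter.2 ⟨(hTS ha).2, (hTS hb).2⟩
    rw [← hr ha hb hab, erase_inter, inter_erase, erase_idem, insert_erase hxab]

open Finset in
theorem exists_uncountable_delta_system {α β : Type*} [DecidableEq β] {S : Set α}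
    (hS : ¬S.Countable) (f : α → Finset β) :
    ∃ T ⊆ S, ¬T.Countable ∧ ∃ r, T.Pairwise fun a b => f a ∩ f b = r := by
  obtain ⟨n, hn⟩ : ∃ n, ¬{a ∈ S | #(f a) = n}.Countable := by
    by_contra! h
    refine hS ((Set.countable_iUnion h).mono fun a ha => ?_)
    exact Set.mem_iUnion.2 ⟨_, ha, rfl⟩
  obtain ⟨T, hTS, hT, r, hr⟩ := exists_uncountable_delta_system_of_card_le n hn fun a ha => ha.2.le
  exact ⟨T, hTS.trans (Set.sep_subset _ _), hT, r, hr⟩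

theorem Set.Pairwise.subset_of_inter_eq {α β : Type*} [DecidableEq β] {T : Set α}
    {f : α → Finset β} {r : Finset β} (hr : T.Pairwise fun a b => f a ∩ f b = r)
    (hT : T.Nontrivial) {a : α} (ha : a ∈ T) : r ⊆ f a := by
  obtain ⟨b, hb, hba⟩ := hT.exists_ne a
  exact hr ha hb hba.symm ▸ Finset.inter_subset_left

namespace FinSupportProd

variable {I : Type*} {P : I → Type*}

def dom (p : FinSupportProd I P) : Finset I := p.2.toFinset

theorem mem_dom {p : FinSupportProd I P} {i : I} : i ∈ p.dom ↔ p.1 i ≠ none :=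
  p.2.mem_toFinset

def restrict (p : FinSupportProd I P) (s : Finset I) (hs : s ⊆ p.dom) : (i : s) → P i :=
  fun i => (p.1 i).get (Option.isSome_iff_ne_none.2 (mem_dom.1 (hs i.2)))

theorem val_eq_restrict (p : FinSupportProd I P) {s : Finset I} (hs : s ⊆ p.dom) {i : I}
    (hi : i ∈ s) : p.1 i = some (p.restrict s hs ⟨i, hi⟩) :=
  (Option.some_get _).symm

variable [DecidableEq I]

def amalgam (p q : FinSupportProd I P) (s : Finset I) (u : (i : s) → P i) :
    FinSupportProd I P :=
  ⟨fun i => if h : i ∈ s then some (u ⟨i, h⟩) else (p.1 i).or (q.1 i), by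
    refine ((s.finite_toSet.union p.2).union q.2).subset fun i hi => ?_
    by_cases his : i ∈ s
    · exact Or.inl (Or.inl his)
    cases hpi : p.1 i <;> simp_all⟩

variable [∀ i, PartialOrder (P i)] {p q : FinSupportProd I P} {s : Finset I}

theorem amalgam_le_left (hp : s ⊆ p.dom) {u : (i : s) → P i} (hu : u ≤ p.restrict s hp) :
    amalgam p q s u ≤ p := by
  intro i x hx
  by_cases his : i ∈ s
  · refine ⟨u ⟨i, his⟩, dif_pos his, ?_⟩
    rw [p.val_eq_restrict hp his, Option.some_inj] at hx
    exact hx ▸ hu ⟨i, his⟩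
  · exact ⟨x, by simp [amalgam, his, hx], le_rfl⟩

theorem amalgam_le_right (hq : s ⊆ q.dom) (hpq : p.dom ∩ q.dom ⊆ s) {u : (i : s) → P i}
    (hu : u ≤ q.restrict s hq) : amalgam p q s u ≤ q := by
  intro i x hx
  by_cases his : i ∈ s
  · refine ⟨u ⟨i, his⟩, dif_pos his, ?_⟩
    rw [q.val_eq_restrict hq his, Option.some_inj] at hx
    exact hx ▸ hu ⟨i, his⟩
  · have hpi : p.1 i = none := by
      by_contra hpi
      exact his (hpq (Finset.mem_inter.2 ⟨mem_dom.2 hpi, mem_dom.2 (by simp [hx])⟩))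
    exact ⟨x, by simp [amalgam, his, hpi, hx], le_rfl⟩

theorem compat_of_compat_restrict (hp : s ⊆ p.dom) (hq : s ⊆ q.dom) (hpq : p.dom ∩ q.dom ⊆ s)
    (h : Compat (p.restrict s hp) (q.restrict s hq)) : Compat p q :=
  let ⟨u, hup, huq⟩ := h
  ⟨amalgam p q s u, amalgam_le_left hp hup, amalgam_le_right hq hpq huq⟩

end FinSupportProd

theorem Set.Countable.of_pairwise_not_compat {α β : Type*} [Preorder α] [Preorder β]
    (hβ : CCC β) {A : Set α} (hA : A.Pairwise fun a b => ¬Compat a b) (f : A → β)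
    (hf : ∀ a b : A, a ≠ b → Compat (f a) (f b) → Compat a.1 b.1) : A.Countable := by
  have hinj : f.Injective := fun a b hab => by
    by_contra hne
    exact hA a.2 b.2 (Subtype.coe_ne_coe.2 hne) (hf a b hne (hab ▸ ⟨f a, le_rfl, le_rfl⟩))
  have hrange : (Set.range f).Pairwise fun x y => ¬Compat x y := by
    rintro _ ⟨a, rfl⟩ _ ⟨b, rfl⟩ hab hc
    have hne : a ≠ b := fun h => hab (congrArg f h)
    exact hA a.2 b.2 (Subtype.coe_ne_coe.2 hne) (hf a b hne hc)
  have := (hβ _ hrange).to_subtype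
  exact Set.countable_coe_iff.1 <| Function.Injective.countable (f := Set.rangeFactorization f)
    fun a b h => hinj (congrArg Subtype.val h)

/-- If every finite subproduct `∏_{i ∈ s} P i` (ordered
coordinatewise) of a family of partial orders has the countable chain
condition, then so does the finite support product of the family. -/
theorem finSupportProd_ccc {I : Type*} (P : I → Type*) [∀ i, PartialOrder (P i)]
    (h : ∀ s : Finset I, CCC ((i : s) → P i)) :
    CCC (FinSupportProd I P) := by
  classical
  intro A hA
  by_contra hAc
  obtain ⟨T, hTA, hT, r, hr⟩ := exists_uncountable_delta_system hAc FinSupportProd.dom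
  have hroot : ∀ p ∈ T, r ⊆ p.dom := fun p =>
    hr.subset_of_inter_eq (Set.Infinite.nontrivial fun hfin => hT hfin.countable)
  refine hT (Set.Countable.of_pairwise_not_compat (h r) (hA.mono hTA)
    (fun p => p.1.restrict r (hroot p p.2)) fun p q hne hpq => ?_)
  exact FinSupportProd.compat_of_compat_restrict _ _
    (hr p.2 q.2 (Subtype.coe_ne_coe.2 hne)).le hpq
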